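/- arXiv:0907.3254 — 3 statements merged into one kernel-verified Lean document; each statement's English description precedes it below -/
import Mathlib

section
/- Let n ≥ 1 and 1 ≤ k ≤ n. For each j with 1 ≤ j ≤ n+1, the number of paths p in 𝒫(n,1,1) with p_1 = +1 that have exactly k peaks and exactly j up steps starting on or below the x-axis equals (1/(n+1))·C(n+1,k)·C(n−1,k−1). -/
/-!
Rotating a sequence of total height `1` so that it starts at an up step `t`, the up steps
that start on or below the axis are exactly the up steps `u` with `(s_u, -u) ≤ (s_t, -t)`
lexicographically, since a rotated height is `s_u - s_t`, plus `1` after wrapping around.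
Hence `j` is the rank of `t` in that order, and each value `1, …, n + 1` is attained by exactly
one rotation (the cycle lemma). Rotations starting with an up step preserve the number of
peaks, so double counting pairs (path, up step) shows that the paths with a given `j` are
`1 / (n + 1)` of all paths starting with an up step with `k` peaks. Those are counted, as
words over `{1, 0}` with `k` descents `10`, by a recursion on the first letter.
-/

open Finset

/-- The sum of the first `m` entries of a sequence `p` of length `N` (the height `s_m`). -/
def psum {N : ℕ} (p : Fin N → ℤ) (m : ℕ) : ℤ :=
  ∑ j ∈ Finset.univ.filter (fun j : Fin N => (j : ℕ) < m), p j

namespace ChungFeller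

variable {N : ℕ}

def rotate {α : Type*} (t : Fin N) (q : Fin N → α) : Fin N → α := fun i => q (i + t)

def upSteps (q : Fin N → ℤ) : Finset (Fin N) := {i | q i = 1}

def lowUpSteps (q : Fin N → ℤ) : ℕ := #{i | q i = 1 ∧ psum q i ≤ 0}

def heightKey (q : Fin N → ℤ) (u : Fin N) : ℤ ×ₗ (Fin N)ᵒᵈ :=
  toLex (psum q u, OrderDual.toDual u)

lemma heightKey_injective (q : Fin N → ℤ) : Function.Injective (heightKey q) := fun _ _ h =>
  OrderDual.toDual.injective (Prod.ext_iff.mp (toLex.injective h)).2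

lemma _root_.Set.BijOn.card_filter_eq_one {ι κ : Type*} [DecidableEq κ] {f : ι → κ}
    {s : Finset ι} {t : Set κ} (hf : Set.BijOn f s t) {v : κ} (hv : v ∈ t) :
    #{x ∈ s | f x = v} = 1 := by
  obtain ⟨x, hx, rfl⟩ := hf.surjOn hv
  exact card_eq_one_iff_existsUnique.mpr
    ⟨x, by simpa using hx, fun y hy => hf.injOn (mem_filter.1 hy).1 hx (mem_filter.1 hy).2⟩

lemma bijOn_card_filter_le {ι β : Type*} [LinearOrder β] (f : ι → β) (s : Finset ι)
    (hf : Set.InjOn f s) :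
    Set.BijOn (fun x => #{y ∈ s | f y ≤ f x}) s (Icc 1 #s) := by
  have hmono : ∀ x ∈ s, ∀ y ∈ s, f x < f y → #{z ∈ s | f z ≤ f x} < #{z ∈ s | f z ≤ f y} :=
    fun x _ y hy hxy => card_lt_card <| (ssubset_iff_of_subset
      (monotone_filter_right s fun _ _ hz => hz.trans hxy.le)).mpr ⟨y, by simp [hy, hxy]⟩
  have hmaps : Set.MapsTo (fun x => #{y ∈ s | f y ≤ f x}) s (Icc 1 #s) := fun x hx =>
    mem_Icc.mpr ⟨card_pos.mpr ⟨x, by simpa using hx⟩, card_filter_le _ _⟩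
  have hinj : Set.InjOn (fun x => #{y ∈ s | f y ≤ f x}) s := by
    intro x hx y hy hxy
    rcases lt_trichotomy (f x) (f y) with h | h | h
    · exact absurd hxy (hmono x hx y hy h).ne
    · exact hf hx hy h
    · exact absurd hxy (hmono y hy x hx h).ne'
  exact ⟨hmaps, hinj, surjOn_of_injOn_of_card_le _ hmaps hinj (by simp)⟩

section Heights

open Fin.NatCast

variable [NeZero N] (q : Fin N → ℤ)

def periodicPsum (m : ℕ) : ℤ := ∑ j ∈ range m, q (j : Fin N)

lemma psum_eq_periodicPsum {m : ℕ} (hm : m ≤ N) : psum q m = periodicPsum q m := by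
  have hrange : (range N).filter (· < m) = range m := by
    ext j; simp only [mem_filter, mem_range]; omega
  rw [psum, periodicPsum, ← hrange, sum_filter, sum_filter]
  simpa using Fin.sum_univ_eq_sum_range (fun j => if j < m then q j else 0) N

lemma periodicPsum_add_self (m : ℕ) :
    periodicPsum q (N + m) = psum q N + periodicPsum q m := by
  rw [psum_eq_periodicPsum q le_rfl, periodicPsum, periodicPsum, periodicPsum, sum_range_add]
  simp

lemma psum_rotate (t : Fin N) {m : ℕ} (hm : m ≤ N) :
    psum (rotate t q) m = periodicPsum q (t + m) - psum q t := by
  rw [psum_eq_periodicPsum _ hm, psum_eq_periodicPsum _ t.is_lt.le, eq_sub_iff_add_eq',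
    periodicPsum, periodicPsum, periodicPsum, sum_range_add]
  simp [rotate, add_comm]

lemma psum_rotate_sub_nonpos_iff (hq : psum q N = 1) (t u : Fin N) :
    psum (rotate t q) (u - t : Fin N) ≤ 0 ↔ heightKey q u ≤ heightKey q t := by
  rw [heightKey, heightKey, Prod.Lex.toLex_le_toLex, psum_rotate q t (u - t).is_lt.le]
  simp only [OrderDual.toDual_le_toDual]
  rcases le_or_gt t u with htu | hut
  · rw [Fin.sub_val_of_le htu, Nat.add_sub_cancel' htu, ← psum_eq_periodicPsum q u.is_lt.le]
    simp only [htu, and_true]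
    omega
  · rw [Fin.coe_sub_iff_lt.mpr hut, show (t : ℕ) + (N + u - t) = N + u by omega,
      periodicPsum_add_self, hq, ← psum_eq_periodicPsum q u.is_lt.le]
    simp only [not_le.mpr hut, and_false, or_false]
    omega

lemma lowUpSteps_rotate (hq : psum q N = 1) (t : Fin N) :
    lowUpSteps (rotate t q) = #{u ∈ upSteps q | heightKey q u ≤ heightKey q t} := by
  refine card_equiv (Equiv.addRight t) fun i => ?_
  simp only [upSteps, mem_filter, mem_univ, true_and, Equiv.coe_addRight,
    ← psum_rotate_sub_nonpos_iff q hq, add_sub_cancel_right]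
  rfl

theorem bijOn_lowUpSteps_rotate (hq : psum q N = 1) :
    Set.BijOn (fun t => lowUpSteps (rotate t q)) (upSteps q) (Icc 1 #(upSteps q)) :=
  (bijOn_card_filter_le _ _ (heightKey_injective q).injOn).congr fun t _ =>
    (lowUpSteps_rotate q hq t).symm

end Heights

variable [NeZero N]

lemma rotate_neg_rotate {α : Type*} (t : Fin N) (q : Fin N → α) :
    rotate (-t) (rotate t q) = q := by
  ext i; simp [rotate, add_assoc]

theorem card_filter_lowUpSteps_mul (W : Finset (Fin N → ℤ)) (m : ℕ)
    (hW : ∀ p ∈ W, p 0 = 1 ∧ psum p N = 1 ∧ #(upSteps p) = m)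
    (hrot : ∀ p ∈ W, ∀ t, p t = 1 → rotate t p ∈ W) {v : ℕ} (hv : v ∈ Icc 1 m) :
    #{p ∈ W | lowUpSteps p = v} * m = #W := by
  let B := W.sigma fun p => {t ∈ upSteps p | lowUpSteps (rotate t p) = v}
  let B' := {p ∈ W | lowUpSteps p = v}.sigma fun p => upSteps p
  have hB : #B = #W := by
    rw [card_sigma, card_eq_sum_ones W]
    refine sum_congr rfl fun p hp => ?_
    obtain ⟨-, hsum, hm⟩ := hW p hp
    exact (bijOn_lowUpSteps_rotate p hsum).card_filter_eq_one (by simpa [hm] using hv)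
  have hB' : #B' = #{p ∈ W | lowUpSteps p = v} * m := by
    rw [card_sigma, sum_const_nat fun p hp => (hW p (mem_filter.1 hp).1).2.2]
  let flip : (Σ _ : Fin N → ℤ, Fin N) → (Σ _ : Fin N → ℤ, Fin N) :=
    fun x => ⟨rotate x.2 x.1, -x.2⟩
  have hflip : ∀ x, flip (flip x) = x := fun ⟨p, t⟩ => by simp [flip, rotate_neg_rotate]
  have hBB' : #B = #B' := by
    refine card_nbij' flip flip ?_ ?_ (fun x _ => hflip x) (fun x _ => hflip x)
    · rintro ⟨p, t⟩ hx
      simp only [B, B', flip, upSteps, coe_sigma, Set.mem_sigma_iff, mem_coe, mem_filter,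
        mem_univ, true_and] at hx ⊢
      obtain ⟨hp, ht, hv⟩ := hx
      exact ⟨⟨hrot p hp t ht, hv⟩, by simpa [rotate] using (hW p hp).1⟩
    · rintro ⟨p, t⟩ hx
      simp only [B, B', flip, upSteps, coe_sigma, Set.mem_sigma_iff, mem_coe, mem_filter,
        mem_univ, true_and] at hx ⊢
      obtain ⟨⟨hp, hv⟩, ht⟩ := hx
      refine ⟨hrot p hp t ht, by simpa [rotate] using (hW p hp).1, ?_⟩
      simpa [rotate_neg_rotate] using hv
  rw [← hB, hBB', hB']

def peaks {L : ℕ} (p : Fin (L + 1) → ℤ) : ℕ := #{i : Fin L | p i.castSucc = 1 ∧ p i.succ = -1}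

def cyclicPeaks (q : Fin N → ℤ) : ℕ := #{i | q i = 1 ∧ q (i + 1) = -1}

lemma card_filter_add_right (P : Fin N → Prop) [DecidablePred P] (t : Fin N) :
    #{i | P (i + t)} = #{i | P i} :=
  card_equiv (Equiv.addRight t) (by simp)

lemma card_upSteps_rotate (t : Fin N) (q : Fin N → ℤ) :
    #(upSteps (rotate t q)) = #(upSteps q) :=
  card_filter_add_right (q · = 1) t

lemma cyclicPeaks_rotate (t : Fin N) (q : Fin N → ℤ) :
    cyclicPeaks (rotate t q) = cyclicPeaks q := by
  simp only [cyclicPeaks, rotate, add_right_comm _ (1 : Fin N) t]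
  exact card_filter_add_right (fun i => q i = 1 ∧ q (i + 1) = -1) t

omit [NeZero N] in
lemma peaks_eq_cyclicPeaks (p : Fin (N + 1) → ℤ) (h0 : p 0 ≠ -1) :
    peaks p = cyclicPeaks p := by
  rw [peaks, cyclicPeaks, card_filter, card_filter, Fin.sum_univ_castSucc]
  simp [Fin.coeSucc_eq_succ, h0]

omit [NeZero N] in
lemma psum_self_eq_two_mul_card_upSteps_sub (q : Fin N → ℤ) (hq : ∀ i, q i = 1 ∨ q i = -1) :
    psum q N = 2 * #(upSteps q) - N := by
  have hstep : ∀ i, q i = 2 * (if q i = 1 then 1 else 0) - 1 := fun i => by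
    rcases hq i with h | h <;> simp [h]
  rw [psum, filter_true_of_mem fun i _ => i.is_lt, sum_congr rfl fun i _ => hstep i,
    sum_sub_distrib, ← mul_sum, sum_boole]
  simp [upSteps]

def upStartPaths (n k : ℕ) : Finset (Fin (2 * n + 1) → ℤ) :=
  {p ∈ Fintype.piFinset fun _ => {1, -1} | #(upSteps p) = n + 1 ∧ p 0 = 1 ∧ peaks p = k}

lemma psum_eq_one_of_mem_upStartPaths {n k : ℕ} {p : Fin (2 * n + 1) → ℤ}
    (hp : p ∈ upStartPaths n k) : psum p (2 * n + 1) = 1 := by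
  simp only [upStartPaths, mem_filter, Fintype.mem_piFinset, mem_insert, mem_singleton] at hp
  rw [psum_self_eq_two_mul_card_upSteps_sub p hp.1, hp.2.1]
  push_cast; ring

lemma rotate_mem_upStartPaths {n k : ℕ} {p : Fin (2 * n + 1) → ℤ} (hp : p ∈ upStartPaths n k)
    {t : Fin (2 * n + 1)} (ht : p t = 1) : rotate t p ∈ upStartPaths n k := by
  simp only [upStartPaths, mem_filter, Fintype.mem_piFinset] at hp ⊢
  obtain ⟨hpm, hups, h0, hpeaks⟩ := hp
  have h0' : rotate t p 0 = 1 := by simpa [rotate] using ht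
  refine ⟨fun i => hpm _, by rw [card_upSteps_rotate, hups], h0', ?_⟩
  rw [peaks_eq_cyclicPeaks _ (by rw [h0']; decide), cyclicPeaks_rotate,
    ← peaks_eq_cyclicPeaks _ (by rw [h0]; decide), hpeaks]

def ones {L : ℕ} (w : Fin L → Bool) : ℕ := #{i | w i = true}

def descents {L : ℕ} (w : Fin (L + 1) → Bool) : ℕ :=
  #{i : Fin L | w i.castSucc = true ∧ w i.succ = false}

def wordCount (L : ℕ) (b : Bool) (a d : ℕ) : ℕ :=
  #{w : Fin (L + 1) → Bool | w 0 = b ∧ ones w = a ∧ descents w = d}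

lemma ones_cons {L : ℕ} (b : Bool) (v : Fin L → Bool) :
    ones (Fin.cons b v : Fin (L + 1) → Bool) = ones v + b.toNat := by
  rw [ones, ones, card_filter, card_filter, Fin.sum_univ_succ]
  cases b <;> simp [add_comm]

lemma descents_cons {L : ℕ} (b : Bool) (v : Fin (L + 1) → Bool) :
    descents (Fin.cons b v : Fin (L + 2) → Bool) = descents v + (b && !v 0).toNat := by
  rw [descents, descents, card_filter, card_filter, Fin.sum_univ_succ]
  cases b <;> cases h : v 0 <;> simp [h, add_comm]

lemma ones_eq_zero_iff {L : ℕ} (w : Fin L → Bool) : ones w = 0 ↔ w = fun _ => false := by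
  simp [ones, funext_iff]

lemma ones_eq_iff {L : ℕ} (w : Fin L → Bool) : ones w = L ↔ w = fun _ => true := by
  simpa [ones, funext_iff] using card_filter_eq_iff (s := univ) (p := fun i => w i = true)

lemma descents_const {L : ℕ} (c : Bool) : descents (fun _ : Fin (L + 1) => c) = 0 := by
  simp [descents]

lemma card_filter_cons {α : Type*} [Fintype α] [DecidableEq α] {L : ℕ} (b : α)
    (P : (Fin (L + 1) → α) → Prop) [DecidablePred P] :
    #{w | w 0 = b ∧ P w} = #{v : Fin L → α | P (Fin.cons b v)} := by
  refine card_nbij' Fin.tail (fun v => Fin.cons b v) ?_ (fun v hv => by simpa using hv) ?_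
    (fun v _ => Fin.tail_cons _ _)
  · intro w hw
    obtain ⟨rfl, hw⟩ : w 0 = b ∧ P w := by simpa using hw
    simpa using hw
  · intro w hw
    obtain ⟨rfl, -⟩ : w 0 = b ∧ P w := by simpa using hw
    exact Fin.cons_self_tail w

lemma wordCount_eq_of_ones_iff {L a : ℕ} (c : Bool)
    (h : ∀ w : Fin (L + 1) → Bool, ones w = a ↔ w = fun _ => c) (b : Bool) (d : ℕ) :
    wordCount L b a d = if c = b ∧ d = 0 then 1 else 0 := by
  simp_rw [wordCount, h]
  split_ifs with hcd
  · rw [card_eq_one]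
    refine ⟨fun _ => c, ?_⟩
    ext w
    simp only [mem_filter, mem_univ, true_and, mem_singleton]
    refine ⟨fun h => h.2.1, ?_⟩
    rintro rfl
    simp [hcd, descents_const]
  · rw [card_eq_zero, filter_eq_empty_iff]
    rintro w - ⟨rfl, rfl, rfl⟩
    simp [descents_const] at hcd

lemma wordCount_zero_ones (L : ℕ) (b : Bool) (d : ℕ) :
    wordCount L b 0 d = if b = false ∧ d = 0 then 1 else 0 := by
  simpa [eq_comm] using wordCount_eq_of_ones_iff false ones_eq_zero_iff b d

lemma wordCount_all_ones (L : ℕ) (b : Bool) (d : ℕ) :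
    wordCount L b (L + 1) d = if b = true ∧ d = 0 then 1 else 0 := by
  simpa [eq_comm] using wordCount_eq_of_ones_iff true ones_eq_iff b d

lemma wordCount_succ (L : ℕ) (b : Bool) (a d : ℕ) :
    wordCount (L + 1) b a d =
      ∑ c, #{v : Fin (L + 1) → Bool | v 0 = c ∧ ones v + b.toNat = a ∧
        descents v + (b && !c).toNat = d} := by
  rw [wordCount, card_filter_cons, card_eq_sum_card_fiberwise (f := fun v => v 0) (t := univ)
    fun _ _ => mem_coe.2 (mem_univ _)]
  refine sum_congr rfl fun c _ => ?_
  rw [filter_filter]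
  refine congrArg card (filter_congr fun v _ => ?_)
  rw [ones_cons, descents_cons]
  constructor
  · rintro ⟨h, rfl⟩; exact ⟨rfl, h⟩
  · rintro ⟨rfl, h⟩; exact ⟨h, rfl⟩

lemma wordCount_succ_true_succ_succ (L a d : ℕ) :
    wordCount (L + 1) true (a + 1) (d + 1) =
      wordCount L true a (d + 1) + wordCount L false a d := by
  rw [wordCount_succ]
  simp [wordCount]

lemma wordCount_succ_true_succ_zero (L a : ℕ) :
    wordCount (L + 1) true (a + 1) 0 = wordCount L true a 0 := by
  rw [wordCount_succ]
  simp [wordCount]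

lemma wordCount_succ_false (L a d : ℕ) :
    wordCount (L + 1) false a d = wordCount L true a d + wordCount L false a d := by
  rw [wordCount_succ]
  simp [wordCount]

lemma wordCount_true_zero {L a : ℕ} (ha : a ≤ L) : wordCount L true a 0 = 0 := by
  induction L generalizing a with
  | zero => simp [show a = 0 by omega, wordCount_zero_ones]
  | succ L ih =>
    rcases a with _ | a
    · simp [wordCount_zero_ones]
    · rw [wordCount_succ_true_succ_zero, ih (by omega)]

theorem wordCount_eq_choose (L : ℕ) :
    (∀ a ≤ L, ∀ d, wordCount L true a (d + 1) = a.choose (d + 1) * (L - a).choose d) ∧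
    (∀ a ≤ L, ∀ d, wordCount L false a d = a.choose d * (L - a).choose d) := by
  induction L with
  | zero =>
    refine ⟨fun a ha d => ?_, fun a ha d => ?_⟩ <;> obtain rfl : a = 0 := by omega
    · simp [wordCount_zero_ones]
    · rcases d with _ | d <;> simp [wordCount_zero_ones]
  | succ L ih =>
    obtain ⟨hTrue, hFalse⟩ := ih
    refine ⟨fun a ha d => ?_, fun a ha d => ?_⟩
    · rcases a with _ | a
      · simp [wordCount_zero_ones]
      · rw [wordCount_succ_true_succ_succ, hTrue a (by omega), hFalse a (by omega),
          Nat.choose_succ_succ' a, Nat.add_sub_add_right]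
        ring
    · rw [wordCount_succ_false]
      rcases ha.lt_or_eq with ha | rfl
      · rw [hFalse a (by omega), Nat.sub_add_comm (by omega)]
        rcases d with _ | d
        · simp [wordCount_true_zero (show a ≤ L by omega)]
        · rw [hTrue a (by omega), Nat.choose_succ_succ' (L - a)]
          ring
      · rw [wordCount_all_ones, wordCount_all_ones]
        rcases d with _ | d <;> simp

def toSteps {L : ℕ} (w : Fin L → Bool) : Fin L → ℤ := fun i => if w i then 1 else -1

lemma card_upStartPaths (n k : ℕ) : #(upStartPaths n k) = wordCount (2 * n) true (n + 1) k := by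
  rw [wordCount, eq_comm]
  refine card_nbij' toSteps (fun p i => decide (p i = 1)) ?_ ?_ ?_ ?_
  · intro w hw
    simp only [mem_coe, mem_filter, mem_univ, true_and] at hw
    obtain ⟨h0, hones, hdesc⟩ := hw
    simp only [upStartPaths, mem_coe, mem_filter, Fintype.mem_piFinset]
    refine ⟨fun i => by by_cases h : w i <;> simp [toSteps, h], ?_, by simp [toSteps, h0], ?_⟩
    · rw [← hones]; simp [upSteps, ones, toSteps]
    · rw [← hdesc]; simp [peaks, descents, toSteps]
  · intro p hp
    simp only [upStartPaths, mem_coe, mem_filter, Fintype.mem_piFinset, mem_insert,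
      mem_singleton] at hp
    obtain ⟨hpm, hups, h0, hpeaks⟩ := hp
    simp only [mem_coe, mem_filter, mem_univ, true_and]
    refine ⟨by simp [h0], by rw [← hups]; simp [ones, upSteps], ?_⟩
    rw [← hpeaks, peaks, descents]
    congr 1; ext i; rcases hpm i.succ with h | h <;> simp [h]
  · intro w _; ext i; by_cases h : w i <;> simp [toSteps, h]
  · intro p hp
    simp only [upStartPaths, mem_coe, mem_filter, Fintype.mem_piFinset, mem_insert,
      mem_singleton] at hp
    ext i; rcases hp.1 i with h | h <;> simp [toSteps, h]

end ChungFeller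

open ChungFeller

theorem narayana_chung_feller_up_steps_general (n k : ℕ) (hn : 1 ≤ n) (hk1 : 1 ≤ k)
    (j : ℕ) (hj1 : 1 ≤ j) (hj2 : j ≤ n + 1) :
    Nat.card {p : Fin (2*n+1) → ℤ //
      (∀ i, p i = 1 ∨ p i = -1) ∧
      (univ.filter (fun i => p i = 1)).card = n + 1 ∧
      p ⟨0, Nat.succ_pos _⟩ = 1 ∧
      (univ.filter (fun i : Fin (2*n) => p i.castSucc = 1 ∧ p i.succ = -1)).card = k ∧
      (univ.filter (fun i : Fin (2*n+1) => p i = 1 ∧ psum p (i : ℕ) ≤ 0)).card = j }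
      * (n + 1) = Nat.choose (n+1) k * Nat.choose (n-1) (k-1) := by
  have hW : ∀ p ∈ upStartPaths n k, p 0 = 1 ∧ psum p (2 * n + 1) = 1 ∧ #(upSteps p) = n + 1 :=
    fun p hp => ⟨(mem_filter.1 hp).2.2.1, psum_eq_one_of_mem_upStartPaths hp,
      (mem_filter.1 hp).2.1⟩
  rw [Nat.subtype_card {p ∈ upStartPaths n k | lowUpSteps p = j} fun p => by
      simp only [upStartPaths, mem_filter, Fintype.mem_piFinset, mem_insert, mem_singleton,
        Fin.zero_eta, and_assoc]
      rfl,
    card_filter_lowUpSteps_mul _ _ hW (fun p hp t ht => rotate_mem_upStartPaths hp ht)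
      (mem_Icc.mpr ⟨hj1, hj2⟩),
    card_upStartPaths]
  obtain ⟨d, rfl⟩ : ∃ d, k = d + 1 := ⟨k - 1, by omega⟩
  rw [(wordCount_eq_choose (2 * n)).1 (n + 1) (by omega) d]
  congr 2
  omega

/-- Among paths in 𝒫(n,1,1) starting with an up step and having exactly `k` peaks,
for each `1 ≤ j ≤ n+1` the number with exactly `j` up steps starting on or below
the x-axis is `(1/(n+1))·C(n+1,k)·C(n-1,k-1)`. -/
theorem narayana_chung_feller_up_steps (n k : ℕ) (hn : 1 ≤ n) (hk1 : 1 ≤ k) (hk2 : k ≤ n)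
    (j : ℕ) (hj1 : 1 ≤ j) (hj2 : j ≤ n + 1) :
    Nat.card {p : Fin (2*n+1) → ℤ //
      (∀ i, p i = 1 ∨ p i = -1) ∧
      (univ.filter (fun i => p i = 1)).card = n + 1 ∧
      p ⟨0, Nat.succ_pos _⟩ = 1 ∧
      (univ.filter (fun i : Fin (2*n) => p i.castSucc = 1 ∧ p i.succ = -1)).card = k ∧
      (univ.filter (fun i : Fin (2*n+1) => p i = 1 ∧ psum p (i : ℕ) ≤ 0)).card = j }
      * (n + 1) = Nat.choose (n+1) k * Nat.choose (n-1) (k-1) :=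
  narayana_chung_feller_up_steps_general n k hn hk1 j hj1 hj2
end

section
/- Let k ≥ 0 and l ≥ 0. For each i with 1 ≤ i ≤ k+l+1, the number of paths q in 𝒬(k,l,1) with q_1 ∈ {+1,0} such that exactly i of the steps q_m with q_m ∈ {+1,0} start on or below the x-axis equals (1/(k+l+1))·C(2k+l,k)·C(k+l+1,k+1). -/
open Finset

/-!
Rotating a path `q ∈ 𝒬(k,l,1)` of length `n = 2k+l+1` cyclically so that it starts at one of its
up or flat steps `j`, the up or flat steps that start on or below the axis are exactly those
steps `p` of `q` with `(s_p, -p) ≤ (s_j, -j)` lexicographically: steps that wrap around gain the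
total rise `1`. So, as `j` runs over the `n - k` up or flat steps, the statistic is the rank of `j`
in this order and takes each value `1, …, n - k` exactly once. Hence for each `i` every path has
exactly one rotation that starts with an up or flat step and has statistic `i`, and `n` times the
number of such paths is `#𝒬(k,l,1) = C(n,k+1) C(k+l,k)`.
-/

theorem Nat.card_eq_card_mul_card_of_existsUnique_vadd {G X : Type*} [AddGroup G]
    [AddAction G X] {A B : Set X} (hBA : B ⊆ A) (hA : ∀ g : G, ∀ x ∈ A, g +ᵥ x ∈ A)
    (hAB : ∀ x ∈ A, ∃! g : G, g +ᵥ x ∈ B) :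
    Nat.card A = Nat.card G * Nat.card B := by
  choose g hgB hg using fun x : A => hAB x x.2
  let e : A ≃ G × B :=
    { toFun := fun x => (g x, ⟨g x +ᵥ (x : X), hgB x⟩)
      invFun := fun p => ⟨-p.1 +ᵥ (p.2 : X), hA _ _ (hBA p.2.2)⟩
      left_inv := fun x => Subtype.ext (neg_vadd_vadd _ _)
      right_inv := fun ⟨h, b⟩ => by
        have hgh : g ⟨-h +ᵥ (b : X), hA _ _ (hBA b.2)⟩ = h :=
          (hg _ h (by simpa only [vadd_neg_vadd] using b.2)).symm
        ext <;> simp [hgh] }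
  rw [Nat.card_congr e, Nat.card_prod]

theorem Finset.bijOn_card_filter_le {α β : Type*} [LinearOrder β] (s : Finset α) {f : α → β}
    (hf : Set.InjOn f s) :
    Set.BijOn (fun x => #{y ∈ s | f y ≤ f x}) s (Icc 1 #s) := by
  have hlt : ∀ x ∈ s, ∀ y ∈ s, f x < f y → #{z ∈ s | f z ≤ f x} < #{z ∈ s | f z ≤ f y} :=
    fun x _ y hy hxy => card_lt_card <| (ssubset_iff_of_subset fun z hz =>
      mem_filter.2 ⟨(mem_filter.1 hz).1, (mem_filter.1 hz).2.trans hxy.le⟩).2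
        ⟨y, by simp [hy], by simp [hxy]⟩
  have hmaps : Set.MapsTo (fun x => #{y ∈ s | f y ≤ f x}) s (Icc 1 #s) := fun x hx => by
    simp only [coe_Icc, Set.mem_Icc, Nat.one_le_iff_ne_zero, ne_eq, card_eq_zero,
      filter_eq_empty_iff, not_forall, not_not]
    exact ⟨⟨x, hx, le_rfl⟩, card_filter_le _ _⟩
  have hinj : Set.InjOn (fun x => #{y ∈ s | f y ≤ f x}) s := fun x hx y hy hxy => by
    rcases lt_trichotomy (f x) (f y) with h | h | h
    · exact absurd hxy (hlt x hx y hy h).ne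
    · exact hf hx hy h
    · exact absurd hxy (hlt y hy x hx h).ne'
  exact ⟨hmaps, hinj, surjOn_of_injOn_of_card_le _ hmaps hinj (by simp)⟩

namespace ChungFeller

variable {n k : ℕ}

/-- `𝒬(k, l, 1)` for `n = 2k + l + 1`. -/
def qPaths (n k : ℕ) : Set (Fin n → ℤ) :=
  {q | (∀ m, q m = 1 ∨ q m = 0 ∨ q m = -1) ∧ #{m | q m = 1} = k + 1 ∧ #{m | q m = -1} = k}

section Counting

variable {U D : Finset (Fin n)}

def ofUpDown (U D : Finset (Fin n)) (m : Fin n) : ℤ :=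
  if m ∈ U then 1 else if m ∈ D then -1 else 0

theorem filter_ofUpDown_eq_one : ({m | ofUpDown U D m = 1} : Finset (Fin n)) = U := by
  ext m; rw [mem_filter]; by_cases hU : m ∈ U <;> by_cases hD : m ∈ D <;> simp [ofUpDown, hU, hD]

theorem filter_ofUpDown_eq_neg_one (h : D ⊆ Uᶜ) :
    ({m | ofUpDown U D m = -1} : Finset (Fin n)) = D := by
  ext m; rw [mem_filter]; by_cases hU : m ∈ U <;> by_cases hD : m ∈ D <;> simp [ofUpDown, hU, hD]
  exact absurd (h hD) (by simpa using hU)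

theorem ofUpDown_filter {q : Fin n → ℤ} (hq : ∀ m, q m = 1 ∨ q m = 0 ∨ q m = -1) :
    ofUpDown {m | q m = 1} {m | q m = -1} = q := by
  ext m; rcases hq m with h | h | h <;> simp [ofUpDown, h]

def qPathsEquivSigma (n k : ℕ) :
    qPaths n k ≃ (powersetCard (k + 1) univ).sigma fun U : Finset (Fin n) => powersetCard k Uᶜ
    where
  toFun q := ⟨⟨univ.filter (q.1 · = 1), univ.filter (q.1 · = -1)⟩, by
    obtain ⟨q, -, hup, hdown⟩ := q
    simp only [mem_sigma, mem_powersetCard, subset_univ, true_and, hup, hdown, and_true]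
    intro m; simp_all⟩
  invFun x := ⟨ofUpDown x.1.1 x.1.2, by
    obtain ⟨⟨U, D⟩, hx⟩ := x
    simp only [mem_sigma, mem_powersetCard, subset_univ, true_and] at hx
    obtain ⟨hU, hDU, hD⟩ := hx
    refine ⟨fun m => by unfold ofUpDown; split_ifs <;> simp, ?_, ?_⟩
    · rw [filter_ofUpDown_eq_one, hU]
    · rw [filter_ofUpDown_eq_neg_one hDU, hD]⟩
  left_inv q := Subtype.ext (ofUpDown_filter q.2.1)
  right_inv x := by
    obtain ⟨⟨U, D⟩, hx⟩ := x
    have hDU := (mem_powersetCard.1 (mem_sigma.1 hx).2).1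
    exact Subtype.ext <|
      Sigma.ext filter_ofUpDown_eq_one (heq_of_eq (filter_ofUpDown_eq_neg_one hDU))

theorem card_qPaths (n k : ℕ) :
    Nat.card (qPaths n k) = n.choose (k + 1) * (n - (k + 1)).choose k := by
  rw [Nat.card_congr (qPathsEquivSigma n k), Nat.card_eq_finsetCard, card_sigma,
    sum_const_nat fun U hU => by
      rw [card_powersetCard, card_compl, Fintype.card_fin, (mem_powersetCard.1 hU).2],
    card_powersetCard, card_univ, Fintype.card_fin]

end Counting

def upFlatSteps (q : Fin n → ℤ) : Finset (Fin n) := {m | q m = 1 ∨ q m = 0}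

def lowUpFlatCount (q : Fin n → ℤ) : ℕ := #((upFlatSteps q).filter fun m : Fin n => psum q m ≤ 0)

theorem sum_eq_one_of_mem_qPaths {q : Fin n → ℤ} (hq : q ∈ qPaths n k) : ∑ m, q m = 1 := by
  obtain ⟨hstep, hup, hdown⟩ := hq
  have hsplit : ∀ m, q m = (if q m = 1 then 1 else 0) - (if q m = -1 then 1 else 0) := by
    intro m; rcases hstep m with h | h | h <;> simp [h]
  rw [sum_congr rfl fun m _ => hsplit m, sum_sub_distrib, sum_boole, sum_boole, hup, hdown]
  push_cast; ring

theorem card_upFlatSteps {q : Fin n → ℤ} (hq : q ∈ qPaths n k) : #(upFlatSteps q) = n - k := by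
  obtain ⟨hstep, -, hdown⟩ := hq
  have hnot : upFlatSteps q = ({m | ¬q m = -1} : Finset (Fin n)) :=
    filter_congr fun m _ => by rcases hstep m with h | h | h <;> simp [h]
  have hsplit := card_filter_add_card_filter_not (s := univ) fun m => q m = -1
  rw [hdown, card_univ, Fintype.card_fin] at hsplit
  rw [hnot]
  omega

section Rotation

variable [NeZero n]

open Fin.NatCast

-- `DomAddAct.mk j +ᵥ q = fun m ↦ q (j + m)` is `q` rotated to start at step `j`.
theorem mk_vadd_mem_qPaths {q : Fin n → ℤ} (hq : q ∈ qPaths n k) (j : Fin n) :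
    DomAddAct.mk j +ᵥ q ∈ qPaths n k := by
  obtain ⟨hstep, hup, hdown⟩ := hq
  have hcard (c : ℤ) : #{m | (DomAddAct.mk j +ᵥ q) m = c} = #{m | q m = c} :=
    card_equiv (Equiv.addLeft j) fun m => by simp [DomAddAct.vadd_apply]
  exact ⟨fun m => hstep _, (hcard 1).trans hup, (hcard (-1)).trans hdown⟩

/-- The heights of `q` read periodically: `height q t = s_t` only for `t ≤ n`. -/
def height (q : Fin n → ℤ) (t : ℕ) : ℤ := ∑ s ∈ range t, q s

theorem psum_eq_height (q : Fin n → ℤ) {m : ℕ} (hm : m ≤ n) : psum q m = height q m := by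
  have hrange : (range n).filter (· < m) = range m := by ext; simp; omega
  have := Fin.sum_univ_eq_sum_range (fun t => if t < m then q t else 0) n
  simp only [Fin.cast_val_eq_self] at this
  rw [psum, height, sum_filter, this, ← sum_filter, hrange]

theorem height_card (q : Fin n → ℤ) : height q n = ∑ m, q m := by
  rw [height]
  simpa using (Fin.sum_univ_eq_sum_range (fun t => q t) n).symm

theorem height_add_card (q : Fin n → ℤ) (t : ℕ) : height q (t + n) = height q t + height q n := by
  rw [height, add_comm, sum_range_add, add_comm]
  simp [height]

theorem height_mk_vadd (q : Fin n → ℤ) (j : Fin n) (t : ℕ) :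
    height (DomAddAct.mk j +ᵥ q) t = height q (j + t) - height q j := by
  rw [height, height, sum_range_add, height]
  simp [DomAddAct.vadd_apply]

def stepKey (q : Fin n → ℤ) (p : Fin n) : ℤ ×ₗ (Fin n)ᵒᵈ := toLex (height q p, OrderDual.toDual p)

theorem stepKey_injective (q : Fin n → ℤ) : Function.Injective (stepKey q) :=
  fun _ _ h => OrderDual.toDual.injective (congrArg Prod.snd (toLex.injective h))

theorem stepKey_le_stepKey_iff (q : Fin n → ℤ) (p j : Fin n) :
    stepKey q p ≤ stepKey q j ↔ height q p < height q j ∨ height q p = height q j ∧ j ≤ p := by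
  simp [stepKey, Prod.Lex.toLex_le_toLex]

theorem psum_mk_vadd_nonpos_iff {q : Fin n → ℤ} (hq : height q n = 1) (j m : Fin n) :
    psum (DomAddAct.mk j +ᵥ q) m ≤ 0 ↔ stepKey q (j + m) ≤ stepKey q j := by
  rw [psum_eq_height _ m.is_lt.le, height_mk_vadd, stepKey_le_stepKey_iff, Fin.le_def]
  have hval := Fin.val_add_eq_ite j m
  split_ifs at hval with hwrap
  · have hsum : (j + m : ℕ) = (j + m : Fin n) + n := by omega
    rw [hsum, height_add_card, hq]
    omega
  · rw [← hval]
    omega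

theorem lowUpFlatCount_mk_vadd {q : Fin n → ℤ} (hq : height q n = 1) (j : Fin n) :
    lowUpFlatCount (DomAddAct.mk j +ᵥ q) = #{p ∈ upFlatSteps q | stepKey q p ≤ stepKey q j} :=
  card_equiv (Equiv.addLeft j) fun m => by
    simp [upFlatSteps, psum_mk_vadd_nonpos_iff hq, DomAddAct.vadd_apply]

def upFlatStartPaths (n k i : ℕ) [NeZero n] : Set (Fin n → ℤ) :=
  {q | q ∈ qPaths n k ∧ 0 ∈ upFlatSteps q ∧ lowUpFlatCount q = i}

theorem existsUnique_mk_vadd_mem_upFlatStartPaths {q : Fin n → ℤ} (hq : q ∈ qPaths n k) {i : ℕ}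
    (hi1 : 1 ≤ i) (hi2 : i ≤ n - k) :
    ∃! j : Fin n, DomAddAct.mk j +ᵥ q ∈ upFlatStartPaths n k i := by
  have hheight : height q n = 1 := (height_card q).trans (sum_eq_one_of_mem_qPaths hq)
  have hmem (j : Fin n) : DomAddAct.mk j +ᵥ q ∈ upFlatStartPaths n k i ↔
      j ∈ upFlatSteps q ∧ #{p ∈ upFlatSteps q | stepKey q p ≤ stepKey q j} = i := by
    simp [upFlatStartPaths, mk_vadd_mem_qPaths hq, lowUpFlatCount_mk_vadd hheight, upFlatSteps,
      DomAddAct.vadd_apply]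
  have hrank := (upFlatSteps q).bijOn_card_filter_le (stepKey_injective q).injOn
  rw [card_upFlatSteps hq] at hrank
  obtain ⟨j, hj, hji⟩ := hrank.surjOn (by simp; omega : i ∈ (Icc 1 (n - k) : Set ℕ))
  refine ⟨j, (hmem j).2 ⟨hj, hji⟩, fun j' hj' => ?_⟩
  obtain ⟨hj'U, hj'i⟩ := (hmem j').1 hj'
  exact hrank.injOn hj'U hj (hj'i.trans hji.symm)

theorem card_qPaths_eq_mul_card_upFlatStartPaths {i : ℕ} (hi1 : 1 ≤ i) (hi2 : i ≤ n - k) :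
    Nat.card (qPaths n k) = n * Nat.card (upFlatStartPaths n k i) := by
  rw [Nat.card_eq_card_mul_card_of_existsUnique_vadd (G := (Fin n)ᵈᵃᵃ) (fun q hq => hq.1)
    (fun c q hq => mk_vadd_mem_qPaths hq (DomAddAct.mk.symm c)) fun q hq =>
      DomAddAct.mk.existsUnique_congr_right.1
        (existsUnique_mk_vadd_mem_upFlatStartPaths hq hi1 hi2),
    Nat.card_congr DomAddAct.mk.symm, Nat.card_eq_fintype_card, Fintype.card_fin]

end Rotation

end ChungFeller

theorem choose_mul_choose_mul_eq (k l : ℕ) :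
    (2 * k + l + 1).choose (k + 1) * (k + l).choose k * (k + l + 1)
      = (2 * k + l + 1) * ((2 * k + l).choose k * (k + l + 1).choose (k + 1)) := by
  apply Nat.eq_of_mul_eq_mul_right (Nat.succ_pos k)
  have h1 := Nat.add_one_mul_choose_eq (2 * k + l) k
  have h2 := Nat.add_one_mul_choose_eq (k + l) k
  calc (2 * k + l + 1).choose (k + 1) * (k + l).choose k * (k + l + 1) * (k + 1)
      = ((k + l + 1) * (k + l).choose k) * ((2 * k + l + 1).choose (k + 1) * (k + 1)) := by ring
    _ = ((k + l + 1).choose (k + 1) * (k + 1)) * ((2 * k + l + 1) * (2 * k + l).choose k) := by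
        rw [h2, ← h1]
    _ = (2 * k + l + 1) * ((2 * k + l).choose k * (k + l + 1).choose (k + 1)) * (k + 1) := by ring

/-- Among paths in 𝒬(k,l,1) (steps +1, 0, −1 with k+1 up steps, k down steps and
l flat steps) starting with an up or flat step, for each `1 ≤ i ≤ k+l+1` the number
with exactly `i` up or flat steps starting on or below the x-axis is
`(1/(k+l+1))·C(2k+l,k)·C(k+l+1,k+1)`. -/
theorem motzkin_schroeder_chung_feller_up_flat (k l : ℕ) (i : ℕ) (hi1 : 1 ≤ i)
    (hi2 : i ≤ k + l + 1) :
    Nat.card {q : Fin (2*k+l+1) → ℤ //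
      (∀ m, q m = 1 ∨ q m = 0 ∨ q m = -1) ∧
      (univ.filter (fun m => q m = 1)).card = k + 1 ∧
      (univ.filter (fun m => q m = -1)).card = k ∧
      (q ⟨0, Nat.succ_pos _⟩ = 1 ∨ q ⟨0, Nat.succ_pos _⟩ = 0) ∧
      (univ.filter (fun m : Fin (2*k+l+1) =>
        (q m = 1 ∨ q m = 0) ∧ psum q (m : ℕ) ≤ 0)).card = i }
      * (k + l + 1) = Nat.choose (2*k+l) k * Nat.choose (k+l+1) (k+1) := by
  rw [Nat.card_congr <| Equiv.subtypeEquivRight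
    (q := (· ∈ ChungFeller.upFlatStartPaths (2 * k + l + 1) k i)) fun q => by
      simp only [ChungFeller.upFlatStartPaths, ChungFeller.qPaths, ChungFeller.lowUpFlatCount,
        ChungFeller.upFlatSteps, filter_filter, Set.mem_ofPred_eq, mem_filter, mem_univ, true_and]
      tauto]
  apply Nat.eq_of_mul_eq_mul_left (Nat.succ_pos (2 * k + l))
  calc (2 * k + l + 1) * (Nat.card (ChungFeller.upFlatStartPaths (2 * k + l + 1) k i) * (k + l + 1))
      = Nat.card (ChungFeller.qPaths (2 * k + l + 1) k) * (k + l + 1) := by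
        rw [ChungFeller.card_qPaths_eq_mul_card_upFlatStartPaths hi1 (by omega)]; ring
    _ = (2 * k + l + 1).choose (k + 1) * (k + l).choose k * (k + l + 1) := by
        rw [ChungFeller.card_qPaths, show 2 * k + l + 1 - (k + 1) = k + l by omega]
    _ = _ := choose_mul_choose_mul_eq k l
end

section
/- Let r ≥ 1 and n ≥ 1. For each k with 1 ≤ k ≤ (r+1)n+1, the number of paths p in 𝒫(n,r,1) such that exactly k of the vertices s_0, s_1, …, s_{(r+1)n} satisfy s_i ≤ 0 equals (1/((r+1)n+1))·C((r+1)n+1, n). -/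
/-!
Continue the heights of a path `p` of length `N` and total height `1` periodically, so that
`s_{x+N} = s_x + 1`. Then vertex `i` of the rotation of `p` that starts at position `t` lies on or
below the axis iff `j = t + i (mod N)` satisfies `s_j < s_t`, or `s_j = s_t` and `j ≥ t`. So the
number of such vertices of that rotation is the rank of `t` for the lexicographic order on
`(s_j, -j)`, and as `t` runs through the `N` rotations it takes each value `1, …, N` exactly once.
Hence rotation is a bijection from {paths with `k` vertices on or below the axis} × ℤ/N onto all
`C(N, n)` paths.
-/

open Finset

open Function

section Rank

variable {α β : Type*} [Fintype α] [LinearOrder β] {f : α → β}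

theorem card_filter_le_lt_of_lt {a b : α} (h : f a < f b) :
    #{x | f x ≤ f a} < #{x | f x ≤ f b} :=
  card_lt_card <| (ssubset_iff_of_subset fun _ hx => by simp_all [le_trans _ h.le]).2
    ⟨b, by simp, by simp [h]⟩

theorem injective_card_filter_le (hf : Injective f) : Injective fun a => #{x | f x ≤ f a} := by
  intro a b hab
  by_contra hne
  rcases (hf.ne hne).lt_or_gt with h | h
  · exact (card_filter_le_lt_of_lt h).ne hab
  · exact (card_filter_le_lt_of_lt h).ne' hab

theorem exists_card_filter_le_eq (hf : Injective f) {k : ℕ} (hk1 : 1 ≤ k)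
    (hk2 : k ≤ Fintype.card α) : ∃ a, #{x | f x ≤ f a} = k := by
  have hsub : univ.image (fun a => #{x | f x ≤ f a}) ⊆ Icc 1 (Fintype.card α) := by
    simp only [subset_iff, mem_image, mem_univ, true_and, mem_Icc, forall_exists_index,
      forall_apply_eq_imp_iff]
    exact fun a => ⟨card_pos.2 ⟨a, by simp⟩, (card_filter_le _ _).trans_eq card_univ⟩
  have himage := eq_of_subset_of_card_le hsub <| by
    rw [card_image_of_injective _ (injective_card_filter_le hf), Nat.card_Icc, card_univ]; omega
  have hk : k ∈ Icc 1 (Fintype.card α) := mem_Icc.2 ⟨hk1, hk2⟩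
  simpa [← himage] using hk

end Rank

def nonposCount {N : ℕ} (p : Fin N → ℤ) : ℕ := #{m ∈ range N | psum p m ≤ 0}

theorem nonposCount_eq_card {N : ℕ} (p : Fin N → ℤ) :
    nonposCount p = #{m : Fin N | psum p m ≤ 0} := by
  rw [nonposCount, card_filter, card_filter,
    Fin.sum_univ_eq_sum_range (fun m => if psum p m ≤ 0 then 1 else 0)]

section Rotation

open Fin.NatCast

variable {N : ℕ} [NeZero N]

def rotate {α : Type*} (t : Fin N) (p : Fin N → α) : Fin N → α := fun j => p (j + t)

theorem rotate_rotate {α : Type*} (s t : Fin N) (p : Fin N → α) :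
    rotate s (rotate t p) = rotate (s + t) p := by
  funext j; simp [rotate, add_assoc]

theorem rotate_zero {α : Type*} (p : Fin N → α) : rotate 0 p = p := by
  funext j; simp [rotate]

theorem card_filter_rotate {α : Type*} (P : α → Prop) [DecidablePred P] (t : Fin N)
    (p : Fin N → α) : #{i | P (rotate t p i)} = #{i | P (p i)} :=
  card_equiv (Equiv.addRight t) fun _ => by simp only [mem_filter_univ]; rfl

def cyclicHeight (p : Fin N → ℤ) (x : ℕ) : ℤ := ∑ i ∈ range x, p (i : Fin N)

variable (p : Fin N → ℤ)

theorem psum_eq_cyclicHeight {m : ℕ} (hm : m ≤ N) : psum p m = cyclicHeight p m := by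
  have : range m = (univ.filter fun j : Fin N => (j : ℕ) < m).map Fin.valEmbedding := by
    ext i
    simp only [mem_range, mem_map, mem_filter, mem_univ, true_and, Fin.valEmbedding_apply]
    exact ⟨fun hi => ⟨⟨i, by omega⟩, hi, rfl⟩, fun ⟨j, hj, hji⟩ => hji ▸ hj⟩
  simp [psum, cyclicHeight, this]

theorem cyclicHeight_period : cyclicHeight p N = ∑ i, p i := by
  rw [cyclicHeight, ← Fin.sum_univ_eq_sum_range]; simp

theorem cyclicHeight_add_period (x : ℕ) :
    cyclicHeight p (N + x) = cyclicHeight p N + cyclicHeight p x := by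
  simp [cyclicHeight, sum_range_add]

theorem cyclicHeight_rotate (t : Fin N) (m : ℕ) :
    cyclicHeight (rotate t p) m = cyclicHeight p (t + m) - cyclicHeight p t := by
  rw [cyclicHeight, cyclicHeight, cyclicHeight, sum_range_add]; simp [rotate, add_comm]

theorem psum_rotate_sub (hp : ∑ i, p i = 1) (t j : Fin N) :
    psum (rotate t p) (j - t : Fin N) =
      cyclicHeight p j - cyclicHeight p t + if j < t then 1 else 0 := by
  rw [psum_eq_cyclicHeight _ (j - t).is_lt.le, cyclicHeight_rotate]
  have ht := t.is_lt
  split_ifs with h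
  · have h' : (j : ℕ) < t := h
    rw [Fin.coe_sub_iff_lt.2 h, show (t : ℕ) + (N + j - t) = N + j by omega,
      cyclicHeight_add_period, cyclicHeight_period, hp]
    ring
  · have h' : (t : ℕ) ≤ j := not_lt.1 h
    rw [Fin.coe_sub_iff_le.2 h', show (t : ℕ) + (j - t) = j by omega]
    ring

def vertexKey (j : Fin N) : ℤ ×ₗ (Fin N)ᵒᵈ := toLex (cyclicHeight p j, OrderDual.toDual j)

theorem vertexKey_injective : Injective (vertexKey p) := fun a b h => by
  simpa [vertexKey] using congrArg (fun x => (ofLex x).2) h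

theorem psum_rotate_sub_nonpos_iff (hp : ∑ i, p i = 1) (t j : Fin N) :
    psum (rotate t p) (j - t : Fin N) ≤ 0 ↔ vertexKey p j ≤ vertexKey p t := by
  rw [psum_rotate_sub p hp, vertexKey, vertexKey, Prod.Lex.toLex_le_toLex,
    OrderDual.toDual_le_toDual, Fin.le_def]
  split_ifs with h <;> rw [Fin.lt_def] at h <;> omega

theorem nonposCount_rotate (hp : ∑ i, p i = 1) (t : Fin N) :
    nonposCount (rotate t p) = #{j | vertexKey p j ≤ vertexKey p t} := by
  rw [nonposCount_eq_card]
  exact card_equiv (Equiv.addRight t) fun m => by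
    simp [← psum_rotate_sub_nonpos_iff p hp]

theorem nonposCount_rotate_injective (hp : ∑ i, p i = 1) :
    Injective fun t => nonposCount (rotate t p) := by
  simpa only [nonposCount_rotate p hp] using injective_card_filter_le (vertexKey_injective p)

theorem exists_nonposCount_rotate_eq (hp : ∑ i, p i = 1) {k : ℕ} (hk1 : 1 ≤ k) (hk2 : k ≤ N) :
    ∃ t, nonposCount (rotate t p) = k := by
  simpa only [nonposCount_rotate p hp] using
    exists_card_filter_le_eq (vertexKey_injective p) hk1 (by simpa using hk2)

theorem card_nonposCount_eq_mul_length (P : (Fin N → ℤ) → Prop)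
    (hrot : ∀ t p, P p → P (rotate t p)) (hsum : ∀ p, P p → ∑ i, p i = 1) {k : ℕ} (hk1 : 1 ≤ k)
    (hk2 : k ≤ N) : Nat.card {p // P p ∧ nonposCount p = k} * N = Nat.card {p // P p} := by
  let Φ : {p // P p ∧ nonposCount p = k} × Fin N → {p // P p} :=
    fun qt => ⟨rotate qt.2 qt.1, hrot _ _ qt.1.2.1⟩
  have hΦ : Bijective Φ := by
    constructor
    · rintro ⟨q₁, t₁⟩ ⟨q₂, t₂⟩ h
      have hq : rotate (-t₂ + t₁) q₁.1 = q₂.1 := by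
        simpa [Φ, rotate_rotate, rotate_zero] using congrArg (rotate (-t₂) ∘ Subtype.val) h
      have ht : -t₂ + t₁ = 0 := nonposCount_rotate_injective q₁.1 (hsum _ q₁.2.1) <| by
        simp only [hq, rotate_zero, q₁.2.2, q₂.2.2]
      rw [ht, rotate_zero] at hq
      rw [Subtype.ext hq, neg_add_eq_zero.1 ht]
    · rintro ⟨p, hp⟩
      obtain ⟨t, ht⟩ := exists_nonposCount_rotate_eq p (hsum p hp) hk1 hk2
      exact ⟨(⟨rotate t p, hrot t p hp, ht⟩, -t),
        Subtype.ext (by simp [Φ, rotate_rotate, rotate_zero])⟩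
  rw [← Nat.card_eq_of_bijective Φ hΦ, Nat.card_prod, Nat.card_eq_fintype_card (α := Fin N),
    Fintype.card_fin]

end Rotation

theorem card_two_valued_fun_eq_choose {α β : Type*} [Fintype α] [DecidableEq β] {a b : β}
    (hab : a ≠ b) (m : ℕ) :
    Nat.card {p : α → β // (∀ i, p i = a ∨ p i = b) ∧ #{i | p i = a} = m} =
      (Fintype.card α).choose m := by
  classical
  let e : {p : α → β // (∀ i, p i = a ∨ p i = b) ∧ #{i | p i = a} = m} ≃
      {s : Finset α // #s = m} :=
    { toFun := fun p => ⟨univ.filter (p.1 · = a), p.2.2⟩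
      invFun := fun s => ⟨fun i => if i ∈ s.1 then a else b,
        fun i => by by_cases h : i ∈ s.1 <;> simp [h],
        by convert s.2 using 2; ext i; by_cases h : i ∈ s.1 <;> simp [h, hab.symm]⟩
      left_inv := fun p => Subtype.ext <| funext fun i => by
        rcases p.2.1 i with h | h <;> simp [h, hab.symm]
      right_inv := fun s => Subtype.ext <| by ext i; by_cases h : i ∈ s.1 <;> simp [h, hab.symm] }
  rw [Nat.card_congr e, Nat.card_eq_fintype_card, Fintype.card_finset_len]

theorem sum_eq_of_forall_eq_or_eq {α R : Type*} [Fintype α] [AddCommMonoid R] [DecidableEq R]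
    {a b : R} {p : α → R} (hp : ∀ i, p i = a ∨ p i = b) :
    ∑ i, p i = #{i | p i = a} • a + #{i | p i ≠ a} • b := by
  rw [← sum_filter_add_sum_filter_not univ (fun i => p i = a),
    sum_congr rfl fun i hi => (mem_filter.1 hi).2, sum_const,
    sum_congr rfl fun i hi => (hp i).resolve_left (mem_filter.1 hi).2, sum_const]

theorem generalized_catalan_chung_feller_vertices_general (r n : ℕ)
    (k : ℕ) (hk1 : 1 ≤ k) (hk2 : k ≤ (r+1)*n + 1) :
    Nat.card {p : Fin ((r+1)*n+1) → ℤ //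
      (∀ i, p i = 1 ∨ p i = -(r : ℤ)) ∧
      (univ.filter (fun i => p i = 1)).card = r*n + 1 ∧
      (((Finset.range ((r+1)*n+1)).filter (fun m => psum p m ≤ 0)).card = k) }
      * ((r+1)*n + 1) = Nat.choose ((r+1)*n+1) n := by
  have hlen : (r + 1) * n + 1 = (r * n + 1) + n := by ring
  have hcount := card_nonposCount_eq_mul_length
    (fun p => (∀ i, p i = 1 ∨ p i = -(r : ℤ)) ∧ #{i | p i = 1} = r * n + 1) ?rotate ?sum hk1 hk2
  · simp only [nonposCount, and_assoc] at hcount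
    rw [hcount, card_two_valued_fun_eq_choose (by omega), Fintype.card_fin, hlen,
      Nat.choose_symm_add]
  · rintro t p ⟨hval, hup⟩
    exact ⟨fun i => hval (i + t), (card_filter_rotate (· = 1) t p).trans hup⟩
  · rintro p ⟨hval, hup⟩
    have hdown : #{i | p i ≠ 1} = n := by
      have := card_filter_add_card_filter_not (s := univ) (fun i => p i = 1)
      simp only [card_univ, Fintype.card_fin, ← ne_eq] at this
      omega
    rw [sum_eq_of_forall_eq_or_eq hval, hup, hdown]
    ring

/-- Among paths in 𝒫(n,r,1), for each `1 ≤ k ≤ (r+1)n+1` the number of paths with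
exactly `k` of the vertices `s_0, …, s_{(r+1)n}` on or below the x-axis is
`(1/((r+1)n+1))·C((r+1)n+1,n)`. -/
theorem generalized_catalan_chung_feller_vertices (r n : ℕ) (hr : 1 ≤ r) (hn : 1 ≤ n)
    (k : ℕ) (hk1 : 1 ≤ k) (hk2 : k ≤ (r+1)*n + 1) :
    Nat.card {p : Fin ((r+1)*n+1) → ℤ //
      (∀ i, p i = 1 ∨ p i = -(r : ℤ)) ∧
      (univ.filter (fun i => p i = 1)).card = r*n + 1 ∧
      (((Finset.range ((r+1)*n+1)).filter (fun m => psum p m ≤ 0)).card = k) }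
      * ((r+1)*n + 1) = Nat.choose ((r+1)*n+1) n :=
  generalized_catalan_chung_feller_vertices_general r n k hk1 hk2
end
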